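/- In a finite-horizon MDP, if two transition kernels P and P' satisfy E_{(s_t,a_t)~P^π}[D_TV(P'(·|s_t,a_t), P(·|s_t,a_t))] ≤ ε for every time step t, where P^π denotes the state-action occupancy at time t induced by rolling out policy π in the MDP with transitions P, then for every t, E_{(s_t,a_t)~P^π}[|Q^π_{P'}(s_t,a_t) − Q^π_P(s_t,a_t)|] ≤ ε·(H−t)·V_max, where V_max = H·R_max bounds cumulative rewards. -/

import Mathlib

/-!
Write `Q'`, `Q` for the `Q`-values under `P'`, `P` and `V'`, `V` for the corresponding state
values. With `k + 1` steps to go,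
`Q' - Q = (P' - P)(R + V'ₖ) + P (V'ₖ - Vₖ)`.
The backup `R + V'ₖ` takes values in `[0, (k + 1) Rmax]`, so the first term is at most
`(k + 1) Rmax · TV(P', P)`; the second is bounded by `P π |Q'ₖ - Qₖ|`, and averaging it over the
occupancy at time `t` gives the occupancy at time `t + 1`. Induction on `k` then bounds the
average error by `ε Rmax (1 + ⋯ + k) ≤ ε k H Rmax`.
-/

open Finset

/-- Q-value of policy `π` in the MDP with transitions `P` and reward `R`,
with `k` steps remaining (value functions at the final step are 0). -/
noncomputable def Qval {S A : Type*} [Fintype S] [Fintype A]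
    (P : S → A → S → ℝ) (R : S → ℝ) (π : S → A → ℝ) : ℕ → S → A → ℝ
  | 0, _, _ => 0
  | (k+1), s, a => ∑ s', P s a s' * (R s' + ∑ a', π s' a' * Qval P R π k s' a')

/-- Occupancy over state-action pairs at time `t` when rolling out policy `π`
from `ρ0` under transitions `P`. -/
noncomputable def occ {S A : Type*} [Fintype S] [Fintype A]
    (P : S → A → S → ℝ) (π : S → A → ℝ) (ρ0 : S → ℝ) : ℕ → S → A → ℝ
  | 0, s, a => ρ0 s * π s a
  | (t+1), s', a' => (∑ s, ∑ a, occ P π ρ0 t s a * P s a s') * π s' a'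

section Weighted

variable {ι : Type*} [Fintype ι]

noncomputable def tvDist (p q : ι → ℝ) : ℝ := (1/2) * ∑ i, |p i - q i|

lemma tvDist_nonneg (p q : ι → ℝ) : 0 ≤ tvDist p q := by
  unfold tvDist; positivity

/-- Centring `f` at `M / 2` costs nothing since `p - q` has total mass zero. -/
lemma abs_sum_sub_mul_le_mul_tvDist {p q f : ι → ℝ} {M : ℝ} (hpq : ∑ i, p i = ∑ i, q i)
    (hf0 : ∀ i, 0 ≤ f i) (hfM : ∀ i, f i ≤ M) :
    |∑ i, (p i - q i) * f i| ≤ M * tvDist p q := by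
  have hmass : ∑ i, (p i - q i) = 0 := by rw [sum_sub_distrib, hpq, sub_self]
  have hcentre : ∑ i, (p i - q i) * f i = ∑ i, (p i - q i) * (f i - M / 2) := by
    simp only [mul_sub, sum_sub_distrib, ← sum_mul, hmass, zero_mul, sub_zero]
  calc |∑ i, (p i - q i) * f i| ≤ ∑ i, |p i - q i| * |f i - M / 2| := by
        rw [hcentre]
        simpa only [abs_mul] using abs_sum_le_sum_abs (fun i => (p i - q i) * (f i - M / 2)) univ
    _ ≤ ∑ i, |p i - q i| * (M / 2) := by
        gcongr with i
        exact abs_le.mpr ⟨by linarith [hf0 i], by linarith [hfM i]⟩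
    _ = M * tvDist p q := by rw [← sum_mul, tvDist]; ring

lemma sum_mul_mem_Icc {w f : ι → ℝ} {lo hi : ℝ} (hw0 : ∀ i, 0 ≤ w i) (hw1 : ∑ i, w i = 1)
    (hf : ∀ i, f i ∈ Set.Icc lo hi) : ∑ i, w i * f i ∈ Set.Icc lo hi := by
  constructor
  · calc lo = ∑ i, w i * lo := by rw [← sum_mul, hw1, one_mul]
      _ ≤ ∑ i, w i * f i := by gcongr with i; exacts [hw0 i, (hf i).1]
  · calc ∑ i, w i * f i ≤ ∑ i, w i * hi := by gcongr with i; exacts [hw0 i, (hf i).2]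
      _ = hi := by rw [← sum_mul, hw1, one_mul]

lemma abs_sum_mul_le_sum_mul_abs {w f : ι → ℝ} (hw0 : ∀ i, 0 ≤ w i) :
    |∑ i, w i * f i| ≤ ∑ i, w i * |f i| := by
  simpa only [abs_mul, abs_of_nonneg (hw0 _)] using abs_sum_le_sum_abs (fun i => w i * f i) univ

end Weighted

lemma mul_add_one_div_two_le_mul {k n : ℕ} (h : k ≤ n) : (k : ℝ) * (k + 1) / 2 ≤ k * n := by
  rcases k.eq_zero_or_pos with rfl | hk
  · simp
  · have : (k : ℝ) + 1 ≤ 2 * n := by exact_mod_cast (by omega : k + 1 ≤ 2 * n)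
    nlinarith

section MDP

variable {S A : Type*} [Fintype S] [Fintype A]
variable {P P' : S → A → S → ℝ} {R : S → ℝ} {π : S → A → ℝ} {ρ0 : S → ℝ} {Rmax : ℝ}

noncomputable def Vval (P : S → A → S → ℝ) (R : S → ℝ) (π : S → A → ℝ) (k : ℕ) (s : S) : ℝ :=
  ∑ a, π s a * Qval P R π k s a

lemma Qval_succ (k : ℕ) (s : S) (a : A) :
    Qval P R π (k + 1) s a = ∑ s', P s a s' * (R s' + Vval P R π k s') := rfl

lemma reward_add_Vval_mem_Icc (hπ0 : ∀ s a, 0 ≤ π s a) (hπ1 : ∀ s, ∑ a, π s a = 1)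
    (hR0 : ∀ s, 0 ≤ R s) (hR1 : ∀ s, R s ≤ Rmax) {k : ℕ}
    (hQ : ∀ s a, Qval P R π k s a ∈ Set.Icc 0 (k * Rmax)) (s : S) :
    R s + Vval P R π k s ∈ Set.Icc 0 ((k + 1) * Rmax) := by
  have hV : Vval P R π k s ∈ Set.Icc 0 (k * Rmax) := sum_mul_mem_Icc (hπ0 s) (hπ1 s) (hQ s)
  exact ⟨add_nonneg (hR0 s) hV.1, by linarith [hR1 s, hV.2]⟩

lemma Qval_mem_Icc (hP0 : ∀ s a s', 0 ≤ P s a s') (hP1 : ∀ s a, ∑ s', P s a s' = 1)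
    (hπ0 : ∀ s a, 0 ≤ π s a) (hπ1 : ∀ s, ∑ a, π s a = 1)
    (hR0 : ∀ s, 0 ≤ R s) (hR1 : ∀ s, R s ≤ Rmax) :
    ∀ (k : ℕ) s a, Qval P R π k s a ∈ Set.Icc 0 (k * Rmax)
  | 0, _, _ => by simp [Qval]
  | k + 1, s, a => by
    push_cast
    exact sum_mul_mem_Icc (hP0 s a) (hP1 s a)
      (reward_add_Vval_mem_Icc hπ0 hπ1 hR0 hR1 (Qval_mem_Icc hP0 hP1 hπ0 hπ1 hR0 hR1 k))

lemma Vval_sub (k : ℕ) (s : S) :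
    Vval P' R π k s - Vval P R π k s = ∑ a, π s a * (Qval P' R π k s a - Qval P R π k s a) := by
  simp only [Vval, mul_sub, sum_sub_distrib]

lemma abs_Qval_succ_sub_le (hP0 : ∀ s a s', 0 ≤ P s a s') (hP1 : ∀ s a, ∑ s', P s a s' = 1)
    (hP'0 : ∀ s a s', 0 ≤ P' s a s') (hP'1 : ∀ s a, ∑ s', P' s a s' = 1)
    (hπ0 : ∀ s a, 0 ≤ π s a) (hπ1 : ∀ s, ∑ a, π s a = 1)
    (hR0 : ∀ s, 0 ≤ R s) (hR1 : ∀ s, R s ≤ Rmax) (k : ℕ) (s : S) (a : A) :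
    |Qval P' R π (k + 1) s a - Qval P R π (k + 1) s a| ≤
      (k + 1) * Rmax * tvDist (P' s a) (P s a) +
      ∑ s', P s a s' * ∑ a', π s' a' * |Qval P' R π k s' a' - Qval P R π k s' a'| := by
  set f' : S → ℝ := fun s' => R s' + Vval P' R π k s'
  have hf' : ∀ s', f' s' ∈ Set.Icc 0 ((k + 1) * Rmax) :=
    reward_add_Vval_mem_Icc hπ0 hπ1 hR0 hR1 (Qval_mem_Icc hP'0 hP'1 hπ0 hπ1 hR0 hR1 k)
  have hsplit : Qval P' R π (k + 1) s a - Qval P R π (k + 1) s a =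
      ∑ s', (P' s a s' - P s a s') * f' s' +
        ∑ s', P s a s' * (Vval P' R π k s' - Vval P R π k s') := by
    simp only [Qval_succ, f', sub_mul, mul_sub, mul_add, sum_sub_distrib, sum_add_distrib]
    ring
  rw [hsplit]
  refine (abs_add_le _ _).trans (add_le_add ?_ ?_)
  · exact abs_sum_sub_mul_le_mul_tvDist (by rw [hP'1, hP1]) (fun s' => (hf' s').1)
      fun s' => (hf' s').2
  · refine (abs_sum_mul_le_sum_mul_abs (hP0 s a)).trans (sum_le_sum fun s' _ => ?_)
    rw [Vval_sub]
    exact mul_le_mul_of_nonneg_left (abs_sum_mul_le_sum_mul_abs (hπ0 s')) (hP0 s a s')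

lemma occ_nonneg (hρ0 : ∀ s, 0 ≤ ρ0 s) (hP0 : ∀ s a s', 0 ≤ P s a s') (hπ0 : ∀ s a, 0 ≤ π s a) :
    ∀ t s a, 0 ≤ occ P π ρ0 t s a
  | 0, s, a => mul_nonneg (hρ0 s) (hπ0 s a)
  | t + 1, s', a' => mul_nonneg (sum_nonneg fun s _ => sum_nonneg fun a _ =>
      mul_nonneg (occ_nonneg hρ0 hP0 hπ0 t s a) (hP0 s a s')) (hπ0 s' a')

lemma sum_occ_succ_mul (t : ℕ) (D : S → A → ℝ) :
    ∑ s', ∑ a', occ P π ρ0 (t + 1) s' a' * D s' a' =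
      ∑ s, ∑ a, occ P π ρ0 t s a * ∑ s', P s a s' * ∑ a', π s' a' * D s' a' := by
  simp only [occ, sum_mul, mul_sum, ← Fintype.sum_prod_type']
  exact Fintype.sum_equiv ⟨fun ⟨s', a', s, a⟩ => ⟨s, a, s', a'⟩,
    fun ⟨s, a, s', a'⟩ => ⟨s', a', s, a⟩, fun _ => rfl, fun _ => rfl⟩ _ _
    fun _ => by simp only [Equiv.coe_fn_mk]; ring

lemma sum_occ_mul_abs_Qval_sub_le (hρ0 : ∀ s, 0 ≤ ρ0 s)
    (hP0 : ∀ s a s', 0 ≤ P s a s') (hP1 : ∀ s a, ∑ s', P s a s' = 1)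
    (hP'0 : ∀ s a s', 0 ≤ P' s a s') (hP'1 : ∀ s a, ∑ s', P' s a s' = 1)
    (hπ0 : ∀ s a, 0 ≤ π s a) (hπ1 : ∀ s, ∑ a, π s a = 1)
    (hR0 : ∀ s, 0 ≤ R s) (hR1 : ∀ s, R s ≤ Rmax) (hRmax : 0 ≤ Rmax) {ε : ℝ}
    (hε : ∀ t, ∑ s, ∑ a, occ P π ρ0 t s a * tvDist (P' s a) (P s a) ≤ ε) :
    ∀ (k t : ℕ), ∑ s, ∑ a, occ P π ρ0 t s a * |Qval P' R π k s a - Qval P R π k s a|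
      ≤ ε * Rmax * (k * (k + 1) / 2)
  | 0, t => by simp [Qval]
  | k + 1, t => by
    have ih := sum_occ_mul_abs_Qval_sub_le hρ0 hP0 hP1 hP'0 hP'1 hπ0 hπ1 hR0 hR1 hRmax hε k (t + 1)
    calc ∑ s, ∑ a, occ P π ρ0 t s a * |Qval P' R π (k + 1) s a - Qval P R π (k + 1) s a|
        ≤ ∑ s, ∑ a, occ P π ρ0 t s a * ((k + 1) * Rmax * tvDist (P' s a) (P s a) +
            ∑ s', P s a s' * ∑ a', π s' a' * |Qval P' R π k s' a' - Qval P R π k s' a'|) := by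
          gcongr with s _ a
          · exact occ_nonneg hρ0 hP0 hπ0 t s a
          · exact abs_Qval_succ_sub_le hP0 hP1 hP'0 hP'1 hπ0 hπ1 hR0 hR1 k s a
      _ = (k + 1) * Rmax * ∑ s, ∑ a, occ P π ρ0 t s a * tvDist (P' s a) (P s a) +
            ∑ s', ∑ a', occ P π ρ0 (t + 1) s' a' * |Qval P' R π k s' a' - Qval P R π k s' a'| := by
          rw [sum_occ_succ_mul, mul_sum]
          simp only [mul_add, sum_add_distrib, mul_sum]
          congr 1
          exact sum_congr rfl fun _ _ => sum_congr rfl fun _ _ => by ring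
      _ ≤ (k + 1) * Rmax * ε + ε * Rmax * (k * (k + 1) / 2) := by gcongr; exact hε t
      _ = ε * Rmax * ((k + 1 : ℕ) * ((k + 1 : ℕ) + 1) / 2) := by push_cast; ring

end MDP

/-- Model-based simulation lemma: if `P'` is `ε`-close to `P` in expected TV
under the occupancy of `π` at every step, then the Q-values of `π` under `P'`
and `P` differ by at most `ε(H−t)·V_max` on average, with `V_max = H·R_max`. -/
theorem stmt6 {S A : Type*} [Fintype S] [Fintype A] (H : ℕ) (Rmax ε : ℝ)
    (P P' : S → A → S → ℝ) (R : S → ℝ) (π : S → A → ℝ) (ρ0 : S → ℝ)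
    (hρ0 : ∀ s, 0 ≤ ρ0 s) (hρ1 : ∑ s, ρ0 s = 1)
    (hP0 : ∀ s a s', 0 ≤ P s a s') (hP1 : ∀ s a, ∑ s', P s a s' = 1)
    (hP'0 : ∀ s a s', 0 ≤ P' s a s') (hP'1 : ∀ s a, ∑ s', P' s a s' = 1)
    (hπ0 : ∀ s a, 0 ≤ π s a) (hπ1 : ∀ s, ∑ a, π s a = 1)
    (hR0 : ∀ s, 0 ≤ R s) (hR1 : ∀ s, R s ≤ Rmax)
    (hε : ∀ t : ℕ,
      ∑ s, ∑ a, occ P π ρ0 t s a * ((1/2) * ∑ s', |P' s a s' - P s a s'|) ≤ ε) :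
    ∀ t : ℕ, t ≤ H →
      ∑ s, ∑ a, occ P π ρ0 t s a *
          |Qval P' R π (H - t) s a - Qval P R π (H - t) s a|
        ≤ ε * ((H - t : ℕ) : ℝ) * ((H : ℝ) * Rmax) := by
  obtain ⟨s₀⟩ : Nonempty S := by
    by_contra hS
    simp [not_nonempty_iff.mp hS] at hρ1
  have hRmax : 0 ≤ Rmax := (hR0 s₀).trans (hR1 s₀)
  have hε0 : 0 ≤ ε := (sum_nonneg fun s _ => sum_nonneg fun a _ =>
    mul_nonneg (occ_nonneg hρ0 hP0 hπ0 0 s a) (tvDist_nonneg _ _)).trans (hε 0)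
  intro t ht
  calc _ ≤ ε * Rmax * ((H - t : ℕ) * ((H - t : ℕ) + 1) / 2) :=
        sum_occ_mul_abs_Qval_sub_le hρ0 hP0 hP1 hP'0 hP'1 hπ0 hπ1 hR0 hR1 hRmax hε (H - t) t
    _ ≤ ε * Rmax * ((H - t : ℕ) * H) := by
        gcongr; exact mul_add_one_div_two_le_mul (Nat.sub_le H t)
    _ = ε * ((H - t : ℕ) : ℝ) * ((H : ℝ) * Rmax) := by ring
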